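/- Let Γ be a group generated by two elements a, b such that a, b, and ab all have finite order. Then every action of Γ on a tree has a global fixed point (Γ has Serre's property (FA)). -/

import Mathlib

open SimpleGraph Walk

namespace SerreFA

variable {V : Type} {T : SimpleGraph V}

lemma getVert_map {W : Type} {S : SimpleGraph W} (f : T →g S) {u v : V}
    (p : T.Walk u v) (i : ℕ) : (p.map f).getVert i = f (p.getVert i) := by
  induction p generalizing i with
  | nil => simp [SimpleGraph.Walk.getVert]
  | cons h q ih =>
    cases i with
    | zero => simp
    | succ n => simpa using ih n

lemma getVert_append_left {u v w : V} (p : T.Walk u v) (q : T.Walk v w) {i : ℕ}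
    (hi : i ≤ p.length) : (p.append q).getVert i = p.getVert i := by
  rw [Walk.getVert_append]
  rcases lt_or_eq_of_le hi with h | h
  · simp [h]
  · subst h
    simp [Walk.getVert_length]

lemma getVert_append_right {u v w : V} (p : T.Walk u v) (q : T.Walk v w) {i : ℕ}
    (hi : p.length ≤ i) : (p.append q).getVert i = q.getVert (i - p.length) := by
  rw [Walk.getVert_append, if_neg (by omega)]

lemma dist_getVert_le (hc : T.Connected) {u v : V} (p : T.Walk u v) {i j : ℕ} (hij : i ≤ j)
    (hj : j ≤ p.length) : T.dist (p.getVert i) (p.getVert j) ≤ j - i := by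
  induction j with
  | zero =>
    have : i = 0 := by omega
    subst this; simp
  | succ n ih =>
    rcases Nat.eq_or_lt_of_le hij with h | h
    · subst h; simp
    · have hin : i ≤ n := by omega
      have hn : n ≤ p.length := by omega
      have hadj : T.Adj (p.getVert n) (p.getVert (n + 1)) :=
        p.adj_getVert_succ (by omega)
      calc T.dist (p.getVert i) (p.getVert (n + 1))
          ≤ T.dist (p.getVert i) (p.getVert n) + T.dist (p.getVert n) (p.getVert (n+1)) :=
            hc.dist_triangle
        _ ≤ (n - i) + 1 := by
            have h1 : T.dist (p.getVert n) (p.getVert (n+1)) ≤ 1 :=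
              T.dist_le (Walk.cons hadj Walk.nil)
            exact Nat.add_le_add (ih hin hn) h1
        _ ≤ n + 1 - i := by omega


lemma isPath_length_eq_dist (hT : T.IsTree) {u v : V} (p : T.Walk u v) (hp : p.IsPath) :
    p.length = T.dist u v := by
  obtain ⟨q, hq, hlen⟩ := hT.isConnected.exists_path_of_dist u v
  rw [(hT.existsUnique_path u v).unique hp hq, hlen]

lemma append_isPath (hT : T.IsTree) {u v w : V} (p : T.Walk u v) (q : T.Walk v w)
    (hp : p.IsPath) (hq : q.IsPath) (hp1 : 1 ≤ p.length) (hq1 : 1 ≤ q.length)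
    (hjunc : p.getVert (p.length - 1) ≠ q.getVert 1) : (p.append q).IsPath := by
  classical
  rw [Walk.isPath_def, Walk.support_append, List.nodup_append]
  refine ⟨hp.support_nodup, hq.support_nodup.tail, ?_⟩
  intro z hzp z' hzq' hzz
  subst hzz
  have hzq : z ∈ q.support := List.mem_of_mem_tail hzq'
  have hzv : z ≠ v := by
    rintro rfl
    have := hq.support_nodup
    rw [q.support_eq_cons] at this
    exact (List.nodup_cons.mp this).1 hzq'
  set r1 : T.Walk z v := p.dropUntil z hzp with hr1
  set r2 : T.Walk z v := (q.takeUntil z hzq).reverse with hr2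
  have hr1p : r1.IsPath := hp.dropUntil hzp
  have hr2p : r2.IsPath := (hq.takeUntil hzq).reverse
  have heq : r1 = r2 := (hT.existsUnique_path z v).unique hr1p hr2p
  have hd1 : 1 ≤ r1.length := by
    by_contra h
    exact hzv (Walk.eq_of_length_eq_zero (p := r1) (by omega))
  have ht1 : 1 ≤ (q.takeUntil z hzq).length := by
    by_contra h
    exact hzv (Walk.eq_of_length_eq_zero (p := q.takeUntil z hzq) (by omega)).symm
  have hsp : (p.takeUntil z hzp).append r1 = p := by
    rw [hr1]
    exact p.take_spec hzp
  have hsq := q.take_spec hzq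
  have h1 : p.getVert (p.length - 1) = r1.getVert (r1.length - 1) := by
    conv_lhs => rw [← hsp]
    rw [Walk.length_append, getVert_append_right _ _ (by omega)]
    congr 1
    omega
  have e1 : r2.getVert (r2.length - 1) = (q.takeUntil z hzq).getVert 1 := by
    rw [hr2, Walk.length_reverse, Walk.getVert_reverse]
    congr 1
    omega
  have e2 : (q.takeUntil z hzq).getVert 1 = q.getVert 1 := by
    conv_rhs => rw [← hsq]
    rw [getVert_append_left _ _ ht1]
  have h2 : r2.getVert (r2.length - 1) = q.getVert 1 := e1.trans e2
  apply hjunc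
  rw [h1, heq, h2]


section Action

variable {Γ : Type} [Group Γ] {V : Type} {T : SimpleGraph V}

/-- The graph homomorphism induced by the action of `g`. -/
@[reducible]
def fhom (ρ : Γ →* Equiv.Perm V)
    (haut : ∀ (g : Γ) (v w : V), T.Adj v w → T.Adj (ρ g v) (ρ g w)) (g : Γ) : T →g T where
  toFun := ρ g
  map_rel' := fun h => haut g _ _ h

lemma rho_injective (ρ : Γ →* Equiv.Perm V) (g : Γ) : Function.Injective (ρ g) :=
  (ρ g).injective

/-- Growth lemma: if the geodesic from `x` to `g x` does not "turn back" at `g x`, then the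
`g`-translates of the geodesic concatenate to geodesics, so `d(x, gⁿ x) = n · d(x, g x)`. -/
lemma grow (hT : T.IsTree) (ρ : Γ →* Equiv.Perm V)
    (haut : ∀ (g : Γ) (v w : V), T.Adj v w → T.Adj (ρ g v) (ρ g w))
    (g : Γ) (x : V) (p : T.Walk x (ρ g x)) (hp : p.IsPath) (h1 : 1 ≤ p.length)
    (hcond : p.getVert (p.length - 1) ≠ ρ g (p.getVert 1)) :
    ∀ n : ℕ, 1 ≤ n → ∃ P : T.Walk x (ρ (g ^ n) x), P.IsPath ∧ P.length = n * p.length ∧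
      P.getVert (P.length - 1) = ρ (g ^ (n - 1)) (p.getVert (p.length - 1)) := by
  intro n hn
  induction n with
  | zero => omega
  | succ n ih =>
    rcases Nat.eq_zero_or_pos n with rfl | hn1
    · refine ⟨p.copy rfl (by rw [pow_one]), ?_, ?_, ?_⟩
      · rwa [Walk.isPath_copy]
      · simp [Walk.length_copy]
      · rw [Walk.length_copy, Walk.getVert_copy]
        norm_num
    · obtain ⟨P, hPp, hPlen, hPpen⟩ := ih hn1
      have hcast : ρ (g ^ n) (ρ g x) = ρ (g ^ (n + 1)) x := by
        rw [pow_succ, map_mul, Equiv.Perm.mul_apply]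
      set q : T.Walk (ρ (g ^ n) x) (ρ (g ^ (n + 1)) x) :=
        (p.map (fhom ρ haut (g ^ n))).copy rfl hcast with hq
      have hqlen : q.length = p.length := by
        rw [hq, Walk.length_copy, Walk.length_map]
      have hqp : q.IsPath := by
        rw [hq, Walk.isPath_copy]
        exact Walk.map_isPath_of_injective (rho_injective ρ (g ^ n)) hp
      have hqget : ∀ i, q.getVert i = ρ (g ^ n) (p.getVert i) := by
        intro i
        rw [hq, Walk.getVert_copy, getVert_map]
        rfl
      have hPlen1 : 1 ≤ P.length := by
        have : 1 * 1 ≤ n * p.length := Nat.mul_le_mul hn1 h1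
        omega
      have hgn : (g : Γ) ^ n = g ^ (n - 1) * g := by
        conv_lhs => rw [show n = (n - 1) + 1 by omega]
        rw [pow_succ]
      have hjunc : P.getVert (P.length - 1) ≠ q.getVert 1 := by
        rw [hPpen, hqget]
        intro h
        apply hcond
        apply rho_injective ρ (g ^ (n - 1))
        rw [h, hgn, map_mul, Equiv.Perm.mul_apply]
      refine ⟨P.append q, append_isPath hT P q hPp hqp hPlen1 (by omega) hjunc, ?_, ?_⟩
      · rw [Walk.length_append, hPlen, hqlen]
        ring
      · rw [Walk.length_append,
          getVert_append_right P q (by omega)]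
        have : P.length + q.length - 1 - P.length = q.length - 1 := by omega
        rw [this, hqget]
        have h3 : q.length - 1 = p.length - 1 := by omega
        rw [h3]
        norm_num

/-- Any finite-order automorphism of a tree acting without inversions fixes a vertex. -/
lemma elliptic (hT : T.IsTree) (ρ : Γ →* Equiv.Perm V)
    (haut : ∀ (g : Γ) (v w : V), T.Adj v w → T.Adj (ρ g v) (ρ g w))
    (hnoinv : ∀ (g : Γ) (v w : V), T.Adj v w → ¬(ρ g v = w ∧ ρ g w = v))
    (g : Γ) (hg : IsOfFinOrder g) : ∃ v : V, ρ g v = v := by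
  classical
  by_contra hfix
  push_neg at hfix
  obtain ⟨x0⟩ := hT.isConnected.nonempty
  have hex : ∃ n : ℕ, ∃ x : V, T.dist x (ρ g x) = n := ⟨_, x0, rfl⟩
  obtain ⟨x, hx⟩ := Nat.find_spec hex
  set ℓ := Nat.find hex with hℓ
  have hℓpos : 1 ≤ ℓ := by
    rcases Nat.eq_zero_or_pos ℓ with h | h
    · exfalso
      rw [h] at hx
      exact hfix x ((hT.isConnected.dist_eq_zero_iff).mp hx).symm
    · exact h
  obtain ⟨p, hp, hplen⟩ := hT.isConnected.exists_path_of_dist x (ρ g x)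
  rw [hx] at hplen
  by_cases hc : p.getVert (p.length - 1) = ρ g (p.getVert 1)
  · rcases eq_or_lt_of_le (show 1 ≤ p.length by omega) with hl1 | hl2
    · -- inversion case
      have hadj : T.Adj x (ρ g x) := by
        rw [← SimpleGraph.dist_eq_one_iff_adj, hx]
        omega
      have h0 : p.getVert (p.length - 1) = x := by
        rw [← hl1]
        exact p.getVert_zero
      have h1' : p.getVert 1 = ρ g x := by
        rw [show (1 : ℕ) = p.length from hl1]
        exact p.getVert_length
      refine hnoinv g x (ρ g x) hadj ⟨rfl, ?_⟩
      rw [← h1', ← hc, h0]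
    · -- shorter displacement, contradicting minimality
      have hkey : T.dist (p.getVert 1) (ρ g (p.getVert 1)) ≤ p.length - 2 := by
        rw [← hc]
        exact dist_getVert_le hT.isConnected p (by omega) (by omega)
      have hlt : T.dist (p.getVert 1) (ρ g (p.getVert 1)) < ℓ := by omega
      exact Nat.find_min hex hlt ⟨p.getVert 1, rfl⟩
  · -- growth case, contradicting finite order
    obtain ⟨P, hPp, hPlen, -⟩ := grow hT ρ haut g x p hp (by omega) hc (orderOf g)
      hg.orderOf_pos
    have hdist := isPath_length_eq_dist hT P hPp
    rw [hPlen] at hdist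
    have hone : ρ (g ^ orderOf g) x = x := by
      rw [pow_orderOf_eq_one, map_one]
      rfl
    rw [hone, SimpleGraph.dist_self] at hdist
    have h1 := hg.orderOf_pos
    have h2 : 0 < orderOf g * p.length := Nat.mul_pos h1 (by omega)
    omega

end Action

end SerreFA


/-- **Serre's lemma.** Let `Γ` be a group generated by two elements `a, b`
such that `a`, `b` and `ab` all have finite order. Then every action of `Γ` on a tree
(by graph automorphisms, without inversions) has a global fixed point: `Γ` has Serre's
property (FA). The action is encoded as a homomorphism `ρ : Γ →* Equiv.Perm V` preserving
adjacency of the tree `T`. -/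
theorem serre_property_FA_of_torsion_generators
    {Γ : Type} [Group Γ] (a b : Γ) (hgen : Subgroup.closure {a, b} = ⊤)
    (ha : IsOfFinOrder a) (hb : IsOfFinOrder b) (hab : IsOfFinOrder (a * b))
    {V : Type} (T : SimpleGraph V) (hT : T.IsTree)
    (ρ : Γ →* Equiv.Perm V)
    (haut : ∀ (g : Γ) (v w : V), T.Adj v w → T.Adj (ρ g v) (ρ g w))
    (hnoinv : ∀ (g : Γ) (v w : V), T.Adj v w → ¬(ρ g v = w ∧ ρ g w = v)) :
    ∃ v : V, ∀ g : Γ, ρ g v = v := by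
  classical
  obtain ⟨xa, hxa⟩ := SerreFA.elliptic hT ρ haut hnoinv a ha
  obtain ⟨xb, hxb⟩ := SerreFA.elliptic hT ρ haut hnoinv b hb
  have hex : ∃ n : ℕ, ∃ x y : V, ρ a x = x ∧ ρ b y = y ∧ T.dist x y = n :=
    ⟨_, xa, xb, hxa, hxb, rfl⟩
  obtain ⟨x, y, hx, hy, hdxy⟩ := Nat.find_spec hex
  set D := Nat.find hex with hD
  rcases Nat.eq_zero_or_pos D with hD0 | hD1
  · -- common fixed point, fixed by the whole group
    rw [hD0] at hdxy
    obtain rfl : x = y := (hT.isConnected.dist_eq_zero_iff).mp hdxy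
    refine ⟨x, ?_⟩
    set K : Subgroup Γ :=
      { carrier := {g : Γ | ρ g x = x}
        one_mem' := by simp
        mul_mem' := by
          intro g h hg hh
          show ρ (g * h) x = x
          rw [map_mul, Equiv.Perm.mul_apply, hh, hg]
        inv_mem' := by
          intro g hg
          have hg' : ρ g x = x := hg
          show ρ g⁻¹ x = x
          have h2 : ρ g⁻¹ (ρ g x) = x := by
            rw [← Equiv.Perm.mul_apply, ← map_mul, inv_mul_cancel, map_one]
            rfl
          rwa [hg'] at h2 } with hK
    have hle : Subgroup.closure {a, b} ≤ K := by
      rw [Subgroup.closure_le]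
      rintro g hg
      simp only [Set.mem_insert_iff, Set.mem_singleton_iff] at hg
      rcases hg with rfl | rfl
      · exact hx
      · exact hy
    intro g
    exact (hgen ▸ hle) (Subgroup.mem_top g)
  · -- the bridge between the fixed trees of `a` and `b` gives `a * b` infinite order
    exfalso
    obtain ⟨p, hp, hplen⟩ := hT.isConnected.exists_path_of_dist x y
    rw [hdxy] at hplen
    have hA : ρ a (p.getVert 1) ≠ p.getVert 1 := by
      intro h
      have hd : T.dist (p.getVert 1) y ≤ D - 1 := by
        have hle' := SerreFA.dist_getVert_le hT.isConnected p
          (show 1 ≤ p.length from by omega) (le_refl p.length)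
        rwa [p.getVert_length, hplen] at hle'
      exact Nat.find_min hex (show T.dist (p.getVert 1) y < D from by omega)
        ⟨p.getVert 1, y, h, hy, rfl⟩
    have hB : ρ b (p.getVert (p.length - 1)) ≠ p.getVert (p.length - 1) := by
      intro h
      have hd : T.dist x (p.getVert (p.length - 1)) ≤ D - 1 := by
        have hle' := SerreFA.dist_getVert_le hT.isConnected p
          (show 0 ≤ p.length - 1 from by omega) (show p.length - 1 ≤ p.length from by omega)
        rw [p.getVert_zero] at hle'
        omega
      exact Nat.find_min hex (show T.dist x (p.getVert (p.length - 1)) < D from by omega)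
        ⟨x, p.getVert (p.length - 1), hx, h, rfl⟩
    have hcast2 : ρ a y = ρ (a * b) y := by
      rw [map_mul, Equiv.Perm.mul_apply, hy]
    set q : T.Walk x (ρ (a * b) y) :=
      (p.map (SerreFA.fhom ρ haut a)).copy hx hcast2 with hqdef
    have hqlen : q.length = p.length := by
      rw [hqdef, SimpleGraph.Walk.length_copy, SimpleGraph.Walk.length_map]
    have hqget : ∀ i, q.getVert i = ρ a (p.getVert i) := by
      intro i
      rw [hqdef, SimpleGraph.Walk.getVert_copy, SerreFA.getVert_map]
      rfl
    have hqp : q.IsPath := by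
      rw [hqdef, SimpleGraph.Walk.isPath_copy]
      exact SimpleGraph.Walk.map_isPath_of_injective (SerreFA.rho_injective ρ a) hp
    have hrevget : p.reverse.getVert (p.reverse.length - 1) = p.getVert 1 := by
      rw [SimpleGraph.Walk.length_reverse, SimpleGraph.Walk.getVert_reverse]
      congr 1
      omega
    have hjunc : p.reverse.getVert (p.reverse.length - 1) ≠ q.getVert 1 := by
      rw [hrevget, hqget]
      exact fun h => hA h.symm
    set Q : T.Walk y (ρ (a * b) y) := p.reverse.append q with hQdef
    have hQp : Q.IsPath := SerreFA.append_isPath hT p.reverse q hp.reverse hqp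
      (by rw [SimpleGraph.Walk.length_reverse]; omega) (by omega) hjunc
    have hQlen : Q.length = p.length + p.length := by
      rw [hQdef, SimpleGraph.Walk.length_append, SimpleGraph.Walk.length_reverse, hqlen]
    have hQ1 : Q.getVert 1 = p.getVert (p.length - 1) := by
      rw [hQdef, SerreFA.getVert_append_left p.reverse q
        (by rw [SimpleGraph.Walk.length_reverse]; omega), SimpleGraph.Walk.getVert_reverse]
    have hQpen : Q.getVert (Q.length - 1) = ρ a (p.getVert (p.length - 1)) := by
      rw [hQdef, SimpleGraph.Walk.length_append, SerreFA.getVert_append_right p.reverse q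
        (by rw [SimpleGraph.Walk.length_reverse]; omega)]
      rw [SimpleGraph.Walk.length_reverse, hqget]
      congr 2
      omega
    have hcond : Q.getVert (Q.length - 1) ≠ ρ (a * b) (Q.getVert 1) := by
      rw [hQpen, hQ1, map_mul, Equiv.Perm.mul_apply]
      intro h
      exact hB (SerreFA.rho_injective ρ a h).symm
    obtain ⟨P, hPp, hPlen, -⟩ := SerreFA.grow hT ρ haut (a * b) y Q hQp (by omega) hcond
      (orderOf (a * b)) hab.orderOf_pos
    have hdist := SerreFA.isPath_length_eq_dist hT P hPp
    rw [hPlen] at hdist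
    have hone : ρ ((a * b) ^ orderOf (a * b)) y = y := by
      rw [pow_orderOf_eq_one, map_one]
      rfl
    rw [hone, SimpleGraph.dist_self] at hdist
    have h1 := hab.orderOf_pos
    have h2 : 0 < orderOf (a * b) * Q.length := Nat.mul_pos h1 (by omega)
    omega
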